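/- The big period P(x,y,z) = z/(2πi)² ⊗ 1 − 1 ⊗ z/(2πi)² + 1 ⊗ xy/(2πi)² − y/(2πi) ⊗ x/(2πi) ∈ ℂ ⊗_ℚ ℂ is invariant under the Heisenberg translation (x,y,z) ↦ (x + m₁, y + n₁, z + m₁y + m₂) for all m₁, n₁ ∈ 2πi·ℚ and m₂ ∈ (2πi)²·ℚ. -/
import Mathlib


open TensorProduct

noncomputable section

/-- `2πi`. -/
def twoPiI : ℂ := 2 * Real.pi * Complex.I

/-- The big period `P(x,y,z)` (equation (31) of the paper). -/
def bigPeriod (x y z : ℂ) : ℂ ⊗[ℚ] ℂ :=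
  (z / twoPiI ^ 2) ⊗ₜ[ℚ] 1 - 1 ⊗ₜ[ℚ] (z / twoPiI ^ 2)
    + 1 ⊗ₜ[ℚ] (x * y / twoPiI ^ 2) - (y / twoPiI) ⊗ₜ[ℚ] (x / twoPiI)

lemma twoPiI_ne_zero : twoPiI ≠ 0 := by
  simp [twoPiI, Real.pi_ne_zero, Complex.I_ne_zero, Complex.ofReal_ne_zero]

/-- The big period is invariant under the rational Heisenberg translation
`(x,y,z) ↦ (x+m₁, y+n₁, z+m₁y+m₂)` with `m₁, n₁ ∈ 2πi·ℚ`, `m₂ ∈ (2πi)²·ℚ`. -/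
theorem stmt14 (x y z m1 n1 m2 : ℂ)
    (hm1 : ∃ q : ℚ, m1 = twoPiI * q)
    (hn1 : ∃ q : ℚ, n1 = twoPiI * q)
    (hm2 : ∃ q : ℚ, m2 = twoPiI ^ 2 * q) :
    bigPeriod (x + m1) (y + n1) (z + m1 * y + m2) = bigPeriod x y z := by
  obtain ⟨p, rfl⟩ := hm1
  obtain ⟨q, rfl⟩ := hn1
  obtain ⟨r, rfl⟩ := hm2
  have hA := twoPiI_ne_zero
  have h1 : (z + twoPiI * p * y + twoPiI ^ 2 * r) / twoPiI ^ 2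
      = z / twoPiI ^ 2 + p • (y / twoPiI) + r • (1 : ℂ) := by
    simp only [Rat.smul_def]
    field_simp
  have h2 : (x + twoPiI * p) * (y + twoPiI * q) / twoPiI ^ 2
      = x * y / twoPiI ^ 2 + q • (x / twoPiI) + p • (y / twoPiI) + p • (q • (1 : ℂ)) := by
    simp only [Rat.smul_def]
    field_simp
    ring
  have h3 : (y + twoPiI * q) / twoPiI = y / twoPiI + q • (1 : ℂ) := by
    simp only [Rat.smul_def]
    field_simp
  have h4 : (x + twoPiI * p) / twoPiI = x / twoPiI + p • (1 : ℂ) := by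
    simp only [Rat.smul_def]
    field_simp
  unfold bigPeriod
  rw [h1, h2, h3, h4]
  simp only [add_tmul, tmul_add, smul_tmul, tmul_smul, smul_smul]
  abel_nf
  simp only [smul_add, smul_smul]
  abel
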